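/- arXiv:1902.05976 — 4 statements merged into one kernel-verified Lean document; each statement's English description precedes it below -/
import Mathlib

section
/- Let m, k, j be positive integers with j ≥ 1, let 1_{m,k} be the m×k all-ones matrix, and let Δ ∈ ℤ^{m×m} be the backward difference matrix. Define a_{l,s} by a_{0,s} = 1 for s ≥ 1, a_{0,s} = 0 for s ≤ 0, and a_{l,s} = Σ_{n ≤ s} a_{l-1,n}. Then for all 1 ≤ l ≤ m and all 1 ≤ s ≤ k, (Δ^{-j} 1_{m,k})_{l,s} = a_{j,l}. -/
/-- The backward difference matrix over ℤ. -/
def backDiff (n : ℕ) : Matrix (Fin n) (Fin n) ℤ :=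
  Matrix.of fun i j => if i = j then 1 else if i.val = j.val + 1 then -1 else 0

/-- The double sequence a_{l,s}. -/
noncomputable def aSeq : ℕ → ℤ → ℤ
  | 0, s => if 1 ≤ s then 1 else 0
  | l + 1, s => ∑ n ∈ Finset.Icc 1 s, aSeq l n

/-!
The inverse of `Δ` is the lower-triangular all-ones matrix `L`. Left multiplication by `L`
replaces every column by its partial sums, which is exactly the recursion defining `a_{j+1}`
from `a_j`; so the claim follows by induction on `j`, starting from the all-ones matrix `a_0`.
-/

def lowerOnes (R : Type*) [Zero R] [One R] (n : ℕ) : Matrix (Fin n) (Fin n) R :=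
  Matrix.of fun i j => if j ≤ i then 1 else 0

lemma lowerOnes_apply {R : Type*} [Zero R] [One R] {n : ℕ} (i j : Fin n) :
    lowerOnes R n i j = if j ≤ i then 1 else 0 := rfl

lemma backDiff_apply {n : ℕ} (i j : Fin n) :
    backDiff n i j = if i = j then 1 else if i.val = j.val + 1 then -1 else 0 := rfl

lemma lowerOnes_mul_apply {R ι : Type*} [NonAssocSemiring R] {n : ℕ}
    (A : Matrix (Fin n) ι R) (i : Fin n) (s : ι) :
    (lowerOnes R n * A) i s = ∑ x ∈ Finset.Iic i, A x s := by
  simp only [Matrix.mul_apply, lowerOnes_apply, ite_mul, one_mul, zero_mul]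
  rw [← Finset.sum_filter]
  congr 1
  ext x
  simp

/-- Row `i` of `Δ` is `eᵢ - eᵢ₋₁` (just `e₀` for `i = 0`), so row `i` of `Δ L` is
`Lᵢ - Lᵢ₋₁ = eᵢ`. -/
lemma backDiff_mul_lowerOnes (m : ℕ) : backDiff m * lowerOnes ℤ m = 1 := by
  ext i j
  rw [Matrix.mul_apply]
  obtain ⟨_ | t, hi⟩ := i
  · rw [Fintype.sum_eq_single ⟨0, hi⟩ fun x hx => ?_]
    · simp [backDiff_apply, lowerOnes_apply, Matrix.one_apply, Fin.ext_iff, Fin.le_def, eq_comm]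
    · simp [backDiff_apply, Fin.ext_iff] at hx ⊢
      omega
  · rw [Fintype.sum_eq_add ⟨t, by omega⟩ ⟨t + 1, hi⟩ (by simp [Fin.ext_iff]) fun x hx => ?_]
    · simp [backDiff_apply, lowerOnes_apply, Matrix.one_apply, Fin.ext_iff, Fin.le_def]
      omega
    · simp [backDiff_apply, Fin.ext_iff] at hx ⊢
      omega

lemma inv_backDiff (m : ℕ) : (backDiff m)⁻¹ = lowerOnes ℤ m :=
  Matrix.inv_eq_right_inv (backDiff_mul_lowerOnes m)

lemma aSeq_succ_natCast (j N : ℕ) :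
    aSeq (j + 1) N = ∑ n ∈ Finset.range N, aSeq j (n + 1) := by
  rw [aSeq, Int.Icc_eq_finset_map, Finset.sum_map]
  simp [add_comm]

lemma lowerOnes_pow_mul_ones_apply {ι : Type*} (m j : ℕ) (l : Fin m) (s : ι) :
    (lowerOnes ℤ m ^ j * Matrix.of fun (_ : Fin m) (_ : ι) => (1 : ℤ)) l s
      = aSeq j (l.val + 1) := by
  induction j generalizing l with
  | zero => simp [aSeq]
  | succ j ih =>
    rw [pow_succ', Matrix.mul_assoc, lowerOnes_mul_apply]
    simp_rw [ih]
    calc ∑ x ∈ Finset.Iic l, aSeq j ((x : ℕ) + 1)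
        = ∑ n ∈ Finset.range (l + 1), aSeq j (n + 1) := by
          rw [Nat.range_succ_eq_Iic, ← Fin.map_valEmbedding_Iic, Finset.sum_map]
          rfl
      _ = aSeq (j + 1) (l.val + 1) := by exact_mod_cast (aSeq_succ_natCast j (l + 1)).symm

theorem stmt3_general (m k j : ℕ) :
    ∀ (l : Fin m) (s : Fin k),
      (((backDiff m)⁻¹ ^ j) * Matrix.of (fun (_ : Fin m) (_ : Fin k) => (1 : ℤ))) l s
        = aSeq j (l.val + 1) := by
  rw [inv_backDiff]
  exact lowerOnes_pow_mul_ones_apply m j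

theorem stmt3 (m k j : ℕ) (hm : 0 < m) (hk : 0 < k) (hj : 1 ≤ j) :
    ∀ (l : Fin m) (s : Fin k),
      (((backDiff m)⁻¹ ^ j) * Matrix.of (fun (_ : Fin m) (_ : Fin k) => (1 : ℤ))) l s
        = aSeq j (l.val + 1) :=
  stmt3_general m k j
end

section
/- Let λ be a nonzero integer with |λ| ≤ η/2, where η = m/ρ for positive integers m, ρ with ρ ∣ m. Then |(1 - e^{2πiρλ/m}) / (ρ(1 - e^{2πiλ/m}))| ≥ 2/π. -/
open Real Complex

/-!
Write `x = π λ / m`. Since `|1 - e^{iθ}| = 2 |sin (θ / 2)|`, the quotient has norm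
`|sin (ρ x)| / (ρ |sin x|)`. Because `ρ ∣ m`, `ρ x = π λ / η` has absolute value at most `π / 2`,
so Jordan's inequality `|sin y| ≥ (2 / π) |y|` bounds the numerator below by `(2 / π) ρ |x|`,
while `|sin x| ≤ |x|` bounds the denominator above by `ρ |x|`.
-/

namespace Real

theorem two_div_pi_mul_abs_le_abs_sin {x : ℝ} (hx : |x| ≤ π / 2) : 2 / π * |x| ≤ |sin x| := by
  refine (mul_le_sin (abs_nonneg x) hx).trans ?_
  rcases abs_choice x with h | h <;> rw [h]
  · exact le_abs_self _
  · rw [sin_neg]; exact neg_le_abs _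

theorem two_div_pi_le_abs_sin_mul_div {r x : ℝ} (hr : 1 ≤ r) (hx : x ≠ 0)
    (hrx : |r * x| ≤ π / 2) : 2 / π ≤ |sin (r * x)| / (r * |sin x|) := by
  have hr0 : 0 < r := one_pos.trans_le hr
  have hxrx : |x| ≤ |r * x| := by
    rw [abs_mul, abs_of_pos hr0]; exact le_mul_of_one_le_left (abs_nonneg x) hr
  have hsin_pos : 0 < |sin x| :=
    (mul_pos (by positivity) (abs_pos.2 hx)).trans_le
      (two_div_pi_mul_abs_le_abs_sin (hxrx.trans hrx))
  rw [le_div_iff₀ (by positivity)]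
  calc 2 / π * (r * |sin x|) ≤ 2 / π * (r * |x|) :=
        mul_le_mul_of_nonneg_left (mul_le_mul_of_nonneg_left abs_sin_le_abs hr0.le) (by positivity)
    _ = 2 / π * |r * x| := by rw [abs_mul, abs_of_pos hr0]
    _ ≤ |sin (r * x)| := two_div_pi_mul_abs_le_abs_sin hrx

end Real

namespace Complex

theorem norm_one_sub_exp_ofReal_mul_I (θ : ℝ) :
    ‖1 - exp (θ * I)‖ = 2 * |Real.sin (θ / 2)| := by
  rw [norm_sub_rev, mul_comm, norm_exp_I_mul_ofReal_sub_one, norm_mul, Real.norm_eq_abs,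
    Real.norm_eq_abs, abs_two]

theorem norm_one_sub_exp_div_mul_one_sub_exp {r : ℝ} (hr : 0 ≤ r) (x : ℝ) :
    ‖(1 - exp ((2 * r * x : ℝ) * I)) / (r * (1 - exp ((2 * x : ℝ) * I)))‖ =
      |Real.sin (r * x)| / (r * |Real.sin x|) := by
  rw [norm_div, norm_mul, norm_one_sub_exp_ofReal_mul_I, norm_one_sub_exp_ofReal_mul_I,
    norm_real, Real.norm_of_nonneg hr, mul_div_cancel_left₀ _ two_ne_zero,
    mul_assoc 2 r x, mul_div_cancel_left₀ _ two_ne_zero, mul_left_comm,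
    mul_div_mul_left _ _ two_ne_zero]

end Complex

theorem stmt7_general (m ρ : ℕ) (hρ : 0 < ρ) (hdvd : ρ ∣ m) (η : ℕ) (hη : η = m / ρ)
    (lam : ℤ) (hlam : lam ≠ 0) (hbd : |(lam : ℝ)| ≤ (η : ℝ) / 2) :
    2 / π ≤ ‖
      ((1 - Complex.exp (2 * π * Complex.I * ρ * lam / m)) /
        (ρ * (1 - Complex.exp (2 * π * Complex.I * lam / m))))‖ := by
  have hlamR : (lam : ℝ) ≠ 0 := by exact_mod_cast hlam
  have hηR : (0 : ℝ) < η := by linarith [abs_pos.2 hlamR]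
  have hρR : (0 : ℝ) < ρ := by exact_mod_cast hρ
  have hm : (m : ℝ) = ρ * η := by rw [hη]; exact_mod_cast (Nat.mul_div_cancel' hdvd).symm
  have hρx : (ρ : ℝ) * (π * lam / m) = π * lam / η := by rw [hm]; field_simp
  have hbound : |(ρ : ℝ) * (π * lam / m)| ≤ π / 2 := by
    rw [hρx, abs_div, abs_mul, abs_of_pos pi_pos, abs_of_pos hηR, div_le_iff₀ hηR]
    nlinarith [pi_pos]
  have hx : π * (lam : ℝ) / m ≠ 0 := by rw [hm]; positivity
  have hnum : 2 * π * I * ρ * lam / m = ((2 * ρ * (π * lam / m) : ℝ) : ℂ) * I := by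
    push_cast; ring
  have hden : 2 * π * I * lam / m = ((2 * (π * lam / m) : ℝ) : ℂ) * I := by
    push_cast; ring
  rw [hnum, hden, ← ofReal_natCast, norm_one_sub_exp_div_mul_one_sub_exp hρR.le]
  exact Real.two_div_pi_le_abs_sin_mul_div (by exact_mod_cast hρ) hx hbound

theorem stmt7 (m ρ : ℕ) (hρ : 0 < ρ) (hdvd : ρ ∣ m) (η : ℕ) (hη : η = m / ρ) (hηpos : 0 < η)
    (lam : ℤ) (hlam : lam ≠ 0) (hbd : |(lam : ℝ)| ≤ (η : ℝ) / 2) :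
    2 / π ≤ ‖
      ((1 - Complex.exp (2 * π * Complex.I * ρ * lam / m)) /
        (ρ * (1 - Complex.exp (2 * π * Complex.I * lam / m))))‖ :=
  stmt7_general m ρ hρ hdvd η hη lam hlam hbd
end

section
/- Let D ∈ ℂ^{k×k} be a diagonal matrix with diagonal entries d_s = (1 - e^{2πiρλ_s/m}) / (ρ(1 - e^{2πiλ_s/m})), where λ_1,...,λ_k are nonzero integers in [-η/2, η/2] and η = m/ρ. Then D is invertible and the operator 2-norm of D⁻¹ satisfies ‖D⁻¹‖₂ ≤ π/2. -/
open Real Complex Matrix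

lemma mul_abs_le_norm_one_sub_exp_I_mul {x : ℝ} (hx : |x| ≤ π) :
    2 / π * |x| ≤ ‖1 - exp (I * x)‖ := by
  calc 2 / π * |x| = 2 * (2 / π * |x / 2|) := by rw [abs_div, abs_two]; ring
    _ ≤ 2 * |Real.sin (x / 2)| := by
        gcongr
        exact Real.mul_abs_le_abs_sin (by rw [abs_div, abs_two]; linarith)
    _ = ‖1 - exp (I * x)‖ := by
        rw [norm_sub_rev, norm_exp_I_mul_ofReal_sub_one, norm_mul, Real.norm_eq_abs,
          Real.norm_eq_abs, abs_two]

/-- Numerator and denominator are chords of the unit circle: the first is at least `2 / π` times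
its arc `|ρ θ|` (Jordan's inequality), the second, scaled by `ρ`, at most its arc `ρ |θ|`. -/
lemma two_div_pi_le_norm_one_sub_exp_div {ρ θ : ℝ} (hρ : 1 ≤ ρ) (hθ : θ ≠ 0)
    (hρθ : |ρ * θ| ≤ π) :
    2 / π ≤ ‖(1 - exp (I * ↑(ρ * θ))) / (ρ * (1 - exp (I * θ)))‖ := by
  have hρθ' : |ρ * θ| = ρ * |θ| := by rw [abs_mul, abs_of_pos (by linarith)]
  have hθπ : |θ| ≤ π := by nlinarith [abs_nonneg θ]
  have hden_le : ‖(ρ : ℂ) * (1 - exp (I * θ))‖ ≤ |ρ * θ| := by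
    rw [norm_mul, norm_real, Real.norm_of_nonneg (by linarith), hρθ', norm_sub_rev]
    gcongr
    exact Real.norm_exp_I_mul_ofReal_sub_one_le
  have hden_pos : 0 < ‖(ρ : ℂ) * (1 - exp (I * θ))‖ := by
    rw [norm_mul, norm_real, Real.norm_of_nonneg (by linarith)]
    exact mul_pos (by linarith) <| (mul_pos (by positivity) (abs_pos.2 hθ)).trans_le
      (mul_abs_le_norm_one_sub_exp_I_mul hθπ)
  rw [norm_div, le_div_iff₀ hden_pos]
  calc 2 / π * ‖(ρ : ℂ) * (1 - exp (I * θ))‖ ≤ 2 / π * |ρ * θ| := by gcongr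
    _ ≤ ‖1 - exp (I * ↑(ρ * θ))‖ := mul_abs_le_norm_one_sub_exp_I_mul hρθ

lemma two_div_pi_le_norm_one_sub_exp_div_of_abs_le_half {ρ η x : ℝ} (hρ : 1 ≤ ρ)
    (hx : x ≠ 0) (hxη : |x| ≤ η / 2) :
    2 / π ≤ ‖(1 - exp (2 * π * I * ρ * x / (ρ * η))) /
      (ρ * (1 - exp (2 * π * I * x / (ρ * η))))‖ := by
  have hη : 0 < η := by linarith [abs_pos.2 hx]
  have hθ : 2 * π * x / (ρ * η) ≠ 0 := by
    have : 0 < ρ := by linarith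
    positivity
  have hρθ : |ρ * (2 * π * x / (ρ * η))| ≤ π := by
    rw [show ρ * (2 * π * x / (ρ * η)) = 2 * π / η * x by field_simp, abs_mul,
      abs_of_pos (by positivity)]
    calc 2 * π / η * |x| ≤ 2 * π / η * (η / 2) := by gcongr
      _ = π := by field_simp
  convert two_div_pi_le_norm_one_sub_exp_div hρ hθ hρθ using 6 <;> push_cast <;> ring

section DiagonalInverse

variable {n K 𝕜 : Type*} [Fintype n] [DecidableEq n]

lemma isUnit_diagonal_of_ne_zero [Field K] {d : n → K} (hd : ∀ i, d i ≠ 0) :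
    IsUnit (diagonal d) :=
  isUnit_diagonal.2 <| Pi.isUnit_iff.2 fun i => (hd i).isUnit

lemma inv_diagonal_of_ne_zero [Field K] {d : n → K} (hd : ∀ i, d i ≠ 0) :
    (diagonal d)⁻¹ = diagonal d⁻¹ :=
  inv_eq_right_inv <| by
    rw [diagonal_mul_diagonal, ← diagonal_one]
    exact congrArg diagonal (funext fun i => mul_inv_cancel₀ (hd i))

open scoped Matrix.Norms.L2Operator in
lemma norm_toEuclideanLin_diagonal_le [RCLike 𝕜] {d : n → 𝕜} {C : ℝ} (hC : 0 ≤ C)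
    (hd : ∀ i, ‖d i‖ ≤ C) (v : EuclideanSpace 𝕜 n) :
    ‖toEuclideanLin (diagonal d) v‖ ≤ C * ‖v‖ :=
  calc ‖toEuclideanLin (diagonal d) v‖ ≤ ‖(diagonal d : Matrix n n 𝕜)‖ * ‖v‖ :=
        (toEuclideanCLM (n := n) (𝕜 := 𝕜) (diagonal d)).le_opNorm v
    _ ≤ C * ‖v‖ := by
        rw [l2_opNorm_diagonal]
        gcongr
        exact (pi_norm_le_iff_of_nonneg hC).2 hd

lemma norm_toEuclideanLin_inv_diagonal_le [RCLike 𝕜] {d : n → 𝕜} {c : ℝ} (hc : 0 < c)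
    (hd : ∀ i, c ≤ ‖d i‖) (v : EuclideanSpace 𝕜 n) :
    ‖toEuclideanLin (diagonal d)⁻¹ v‖ ≤ c⁻¹ * ‖v‖ := by
  rw [inv_diagonal_of_ne_zero fun i => norm_pos_iff.1 (hc.trans_le (hd i))]
  refine norm_toEuclideanLin_diagonal_le (inv_nonneg.2 hc.le) (fun i => ?_) v
  rw [Pi.inv_apply, norm_inv]
  exact inv_anti₀ hc (hd i)

end DiagonalInverse

theorem stmt8_general (k m ρ η : ℕ) (hρ : 0 < ρ) (hdvd : ρ ∣ m) (hη : η = m / ρ)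
    (lam : Fin k → ℤ) (hlam : ∀ s, lam s ≠ 0) (hbd : ∀ s, |(lam s : ℝ)| ≤ (η : ℝ) / 2)
    (D : Matrix (Fin k) (Fin k) ℂ)
    (hD : D = Matrix.diagonal fun s =>
      (1 - Complex.exp (2 * π * Complex.I * ρ * lam s / m)) /
        (ρ * (1 - Complex.exp (2 * π * Complex.I * lam s / m)))) :
    IsUnit D ∧ ∀ v : EuclideanSpace ℂ (Fin k),
      ‖Matrix.toEuclideanLin D⁻¹ v‖ ≤ π / 2 * ‖v‖ := by
  have hm : (m : ℂ) = ρ * η := by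
    rw [hη]
    exact_mod_cast (Nat.mul_div_cancel' hdvd).symm
  have hentry : ∀ s, 2 / π ≤ ‖(1 - exp (2 * π * I * ρ * lam s / m)) /
      (ρ * (1 - exp (2 * π * I * lam s / m)))‖ := fun s => by
    simpa [hm] using two_div_pi_le_norm_one_sub_exp_div_of_abs_le_half (ρ := ρ) (η := η)
      (x := lam s) (by exact_mod_cast hρ) (by exact_mod_cast hlam s) (hbd s)
  have hpos : (0 : ℝ) < 2 / π := by positivity
  subst hD
  refine ⟨isUnit_diagonal_of_ne_zero fun s => norm_pos_iff.1 (hpos.trans_le (hentry s)),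
    fun v => ?_⟩
  simpa only [inv_div] using norm_toEuclideanLin_inv_diagonal_le hpos hentry v

theorem stmt8 (k m ρ η : ℕ) (hk : 0 < k) (hρ : 0 < ρ) (hdvd : ρ ∣ m) (hη : η = m / ρ)
    (hηpos : 0 < η)
    (lam : Fin k → ℤ) (hlam : ∀ s, lam s ≠ 0) (hbd : ∀ s, |(lam s : ℝ)| ≤ (η : ℝ) / 2)
    (D : Matrix (Fin k) (Fin k) ℂ)
    (hD : D = Matrix.diagonal fun s =>
      (1 - Complex.exp (2 * π * Complex.I * ρ * lam s / m)) /
        (ρ * (1 - Complex.exp (2 * π * Complex.I * lam s / m)))) :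
    IsUnit D ∧ ∀ v : EuclideanSpace ℂ (Fin k),
      ‖Matrix.toEuclideanLin D⁻¹ v‖ ≤ π / 2 * ‖v‖ :=
  stmt8_general k m ρ η hρ hdvd hη lam hlam hbd D hD
end

section
/- Let V ∈ ℂ^{k×k} be diagonal with diagonal vector φ_0 of unit Euclidean norm, and let 1_{k,η} be the k×η all-ones matrix and Δ ∈ ℤ^{η×η} the backward difference matrix. Then for every integer p ≥ 1, the ∞-to-2 operator norm satisfies ‖V^* 1_{k,η} Δ^p‖_{∞,2} = 2^{p-1}, provided η ≥ p+1. -/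
/-!
`V^* 1_{k,η} Δ^p` is the rank-one matrix `conj φ₀ ⊗ (1ᵀ Δ^p)`, and the `∞ → 2` norm of a rank-one
matrix `u wᵀ` is `‖u‖₂ ‖w‖₁`: the supremum of `|w ⬝ᵥ x|` over `‖x‖_∞ = 1` is attained by the vector
aligning the phases of `w`. Counting from the last column, the row `1ᵀ Δ^p` has entries
`(-1)^d (p-1).choose d` (Pascal's rule drives the induction on `p`), whose absolute values sum to
`2^(p-1)` as soon as all of them fit in the row, i.e. `p ≤ η`.
-/

open Real Matrix

/-- The backward difference matrix over ℂ. -/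
def backDiffC (n : ℕ) : Matrix (Fin n) (Fin n) ℂ :=
  Matrix.of fun i j => if i = j then 1 else if i.val = j.val + 1 then -1 else 0

/-- The all-ones k×η matrix. -/
def onesM (k η : ℕ) : Matrix (Fin k) (Fin η) ℂ := Matrix.of fun _ _ => 1

/-- The Euclidean (ℓ²) norm of a finite vector. -/
noncomputable def l2norm {n : Type*} [Fintype n] (v : n → ℂ) : ℝ :=
  Real.sqrt (∑ i, ‖v i‖ ^ 2)

/-- The ∞-to-2 operator norm of a matrix: sup of ‖Tx‖₂ over ‖x‖_∞ = 1.
(The sup norm on `Fin n → ℂ` is the default Pi norm.) -/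
noncomputable def normInfTwo {p n : Type*} [Fintype p] [Fintype n]
    (T : Matrix p n ℂ) : ℝ :=
  sSup {c : ℝ | ∃ x : n → ℂ, ‖x‖ = 1 ∧ c = l2norm (T *ᵥ x)}

lemma vecMul_backDiffC {η : ℕ} (v : Fin η → ℂ) (j : Fin η) :
    (v ᵥ* backDiffC η) j = v j - if h : j.val + 1 < η then v ⟨j.val + 1, h⟩ else 0 := by
  simp only [vecMul, dotProduct, backDiffC, of_apply]
  split_ifs with h
  · rw [Fintype.sum_eq_add j ⟨j.val + 1, h⟩ (by simp [Fin.ext_iff])]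
    · simp only [↓reduceIte, mul_one, Fin.ext_iff, Nat.add_eq_left, one_ne_zero, mul_neg]
      ring
    · rintro i ⟨hij, hij'⟩
      simp [hij, Fin.ext_iff.not.mp hij']
  · rw [Fintype.sum_eq_single j]
    · simp
    · intro i hij
      have : i.val ≠ j.val + 1 := by omega
      simp [hij, this]

noncomputable def signedBinomialRow (η q : ℕ) : Fin η → ℂ :=
  fun j => (-1) ^ (η - 1 - j.val) * (q.choose (η - 1 - j.val) : ℂ)

lemma one_vecMul_backDiffC (η : ℕ) : 1 ᵥ* backDiffC η = signedBinomialRow η 0 := by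
  funext j
  rw [vecMul_backDiffC]
  split_ifs with h
  · simp [signedBinomialRow, Nat.choose_eq_zero_of_lt (by omega : 0 < η - 1 - j.val)]
  · simp [signedBinomialRow, (by omega : η - 1 - j.val = 0)]

lemma signedBinomialRow_vecMul_backDiffC (η q : ℕ) :
    signedBinomialRow η q ᵥ* backDiffC η = signedBinomialRow η (q + 1) := by
  funext j
  rw [vecMul_backDiffC]
  split_ifs with h
  · simp only [signedBinomialRow, (by omega : η - 1 - j.val = η - 1 - (j.val + 1) + 1),
      Nat.choose_succ_succ]
    push_cast
    ring
  · simp [signedBinomialRow, (by omega : η - 1 - j.val = 0)]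

lemma one_vecMul_backDiffC_pow (η q : ℕ) :
    1 ᵥ* backDiffC η ^ (q + 1) = signedBinomialRow η q := by
  induction q with
  | zero => rw [pow_one, one_vecMul_backDiffC]
  | succ q ih => rw [pow_succ, ← vecMul_vecMul, ih, signedBinomialRow_vecMul_backDiffC]

lemma sum_norm_signedBinomialRow {η q : ℕ} (hq : q < η) :
    ∑ j, ‖signedBinomialRow η q j‖ = 2 ^ q := by
  have hnorm : ∀ j, ‖signedBinomialRow η q j‖ = (q.choose (η - 1 - j.val) : ℝ) := by
    simp [signedBinomialRow]
  simp_rw [hnorm]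
  rw [Fin.sum_univ_eq_sum_range (fun i => (q.choose (η - 1 - i) : ℝ)),
    Finset.sum_range_reflect (fun i => (q.choose i : ℝ)), ← Nat.cast_sum,
    ← Finset.sum_range_add_sum_Ico _ hq, Nat.sum_range_choose, Finset.sum_eq_zero]
  · simp
  · intro i hi
    exact Nat.choose_eq_zero_of_lt (Finset.mem_Ico.mp hi).1

section RankOne

variable {m n : Type*}

noncomputable def phaseAlign (w : n → ℂ) : n → ℂ :=
  fun j => Complex.exp (↑(-(w j).arg) * Complex.I)

lemma norm_phaseAlign_apply (w : n → ℂ) (j : n) : ‖phaseAlign w j‖ = 1 :=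
  Complex.norm_exp_ofReal_mul_I _

variable [Fintype m] [Fintype n]

lemma l2norm_star (u : m → ℂ) : l2norm (star u) = l2norm u := by
  simp [l2norm]

lemma l2norm_mul_const (u : m → ℂ) (c : ℂ) : l2norm (fun i => u i * c) = l2norm u * ‖c‖ := by
  rw [l2norm, l2norm, ← Real.sqrt_sq (norm_nonneg c), ← Real.sqrt_mul (by positivity),
    Finset.sum_mul]
  simp only [norm_mul, mul_pow]

lemma norm_dotProduct_le_sum_norm {w x : n → ℂ} (hx : ‖x‖ ≤ 1) :
    ‖w ⬝ᵥ x‖ ≤ ∑ j, ‖w j‖ :=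
  calc ‖w ⬝ᵥ x‖ ≤ ∑ j, ‖w j * x j‖ := norm_sum_le _ _
    _ ≤ ∑ j, ‖w j‖ := Finset.sum_le_sum fun j _ => by
        rw [norm_mul]
        exact mul_le_of_le_one_right (norm_nonneg _) ((norm_le_pi_norm x j).trans hx)

lemma norm_phaseAlign [Nonempty n] (w : n → ℂ) : ‖phaseAlign w‖ = 1 :=
  le_antisymm ((pi_norm_le_iff_of_nonneg zero_le_one).2 fun j => (norm_phaseAlign_apply w j).le)
    ((norm_phaseAlign_apply w (Classical.arbitrary n)).symm.le.trans (norm_le_pi_norm _ _))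

lemma dotProduct_phaseAlign (w : n → ℂ) : w ⬝ᵥ phaseAlign w = ↑(∑ j, ‖w j‖) := by
  push_cast
  refine Finset.sum_congr rfl fun j _ => ?_
  conv_lhs => rw [← Complex.norm_mul_exp_arg_mul_I (w j)]
  rw [phaseAlign, mul_assoc, ← Complex.exp_add]
  push_cast
  simp

theorem normInfTwo_vecMulVec [Nonempty n] (u : m → ℂ) (w : n → ℂ) :
    normInfTwo (vecMulVec u w) = l2norm u * ∑ j, ‖w j‖ := by
  have hmulVec : ∀ x, l2norm (vecMulVec u w *ᵥ x) = l2norm u * ‖w ⬝ᵥ x‖ := fun x => by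
    rw [vecMulVec_mulVec]
    exact l2norm_mul_const u _
  refine IsGreatest.csSup_eq ⟨⟨phaseAlign w, norm_phaseAlign w, ?_⟩, ?_⟩
  · rw [hmulVec, dotProduct_phaseAlign, Complex.norm_real, Real.norm_of_nonneg (by positivity)]
  · rintro c ⟨x, hx, rfl⟩
    rw [hmulVec]
    exact mul_le_mul_of_nonneg_left (norm_dotProduct_le_sum_norm hx.le) (Real.sqrt_nonneg _)

end RankOne

lemma onesM_eq_vecMulVec (k η : ℕ) : onesM k η = vecMulVec 1 1 := by
  ext; simp [onesM, vecMulVec_apply]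

lemma conjTranspose_diagonal_mul_onesM_mul {k η : ℕ} (φ : Fin k → ℂ)
    (M : Matrix (Fin η) (Fin η) ℂ) :
    (diagonal φ)ᴴ * onesM k η * M = vecMulVec (star φ) (1 ᵥ* M) := by
  rw [onesM_eq_vecMulVec, diagonal_conjTranspose, mul_vecMulVec, vecMulVec_mul]
  congr 1
  ext i
  simp [mulVec_diagonal]

theorem stmt15_general (k η p : ℕ) (hp : 1 ≤ p) (hη : p + 1 ≤ η)
    (φ0 : Fin k → ℂ) (hφ0 : l2norm φ0 = 1)
    (V : Matrix (Fin k) (Fin k) ℂ) (hV : V = Matrix.diagonal φ0) :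
    normInfTwo (Vᴴ * onesM k η * backDiffC η ^ p) = 2 ^ (p - 1) := by
  subst hV
  obtain ⟨q, rfl⟩ : ∃ q, p = q + 1 := ⟨p - 1, by omega⟩
  have : Nonempty (Fin η) := ⟨⟨0, by omega⟩⟩
  rw [conjTranspose_diagonal_mul_onesM_mul, one_vecMul_backDiffC_pow, normInfTwo_vecMulVec,
    l2norm_star, hφ0, sum_norm_signedBinomialRow (by omega), one_mul, Nat.add_sub_cancel]

theorem stmt15 (k η p : ℕ) (hk : 0 < k) (hp : 1 ≤ p) (hη : p + 1 ≤ η)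
    (φ0 : Fin k → ℂ) (hφ0 : l2norm φ0 = 1)
    (V : Matrix (Fin k) (Fin k) ℂ) (hV : V = Matrix.diagonal φ0) :
    normInfTwo (Vᴴ * onesM k η * backDiffC η ^ p) = 2 ^ (p - 1) :=
  stmt15_general k η p hp hη φ0 hφ0 V hV
end
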